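/- (Theorem 2.4, first identity, q-case.) Let n ≥ 1 be a natural number, β₁, β₂ ∈ (0,1) and m₂ ∈ ℕ. Then the double series over all pairs (v₁,v₂) ∈ ℕ × ℕ of [v₂]_{m₂,q} · v(v₁,v₂) converges, with sum equal to [n+m₂−1]_{m₂,q} · β₂^{m₂} / ∏_{i=1}^{m₂} (1 − β₂·q^{n+i−1}). -/

import Mathlib

open Finset

/-- q-integer `[k]_q = (1 - q^k)/(1 - q)`. -/
noncomputable def qInt (q : ℝ) (k : ℤ) : ℝ := (1 - q ^ k) / (1 - q)

/-- q-factorial `[n]_q! = ∏_{i=1}^n [i]_q`. -/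
noncomputable def qFact (q : ℝ) (n : ℕ) : ℝ := ∏ i ∈ Finset.Icc 1 n, qInt q (i : ℤ)

/-- q-binomial coefficient `C_q(n,k)`. -/
noncomputable def qBinom (q : ℝ) (n k : ℕ) : ℝ := qFact q n / (qFact q k * qFact q (n - k))

/-- q-falling factorial `[u]_{m,q} = ∏_{i=1}^m [u-i+1]_q`. -/
noncomputable def qFall (q : ℝ) (u : ℤ) (m : ℕ) : ℝ := ∏ i ∈ Finset.Icc 1 m, qInt q (u - (i : ℤ) + 1)

/-- `[k]_{q⁻¹} = q^{1-k} · [k]_q`. -/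
noncomputable def qIntInv (q : ℝ) (k : ℤ) : ℝ := q ^ (1 - k) * qInt q k

/-- `[u]_{m,q⁻¹} = ∏_{i=1}^m [u-i+1]_{q⁻¹}`. -/
noncomputable def qFallInv (q : ℝ) (u : ℤ) (m : ℕ) : ℝ := ∏ i ∈ Finset.Icc 1 m, qIntInv q (u - (i : ℤ) + 1)

/-- `b(k) = k(k-1)/2`. -/
def bb (k : ℕ) : ℕ := k * (k - 1) / 2

/-- `⟨1 ⊕ α⟩_m = ∏_{i=1}^m (1 + α q^{i-1})`. -/
noncomputable def oplus (q α : ℝ) (m : ℕ) : ℝ := ∏ i ∈ Finset.Icc 1 m, (1 + α * q ^ (i - 1))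

/-- `⟨1 ⊖ β⟩_m = ∏_{i=1}^m (1 - β q^{i-1})`. -/
noncomputable def ominus (q β : ℝ) (m : ℕ) : ℝ := ∏ i ∈ Finset.Icc 1 m, (1 - β * q ^ (i - 1))

/-- q-trinomial coefficient `T_q(n; x₁, x₂)`. -/
noncomputable def qTri (q : ℝ) (n x1 x2 : ℕ) : ℝ :=
  qFact q n / (qFact q x1 * qFact q x2 * qFact q (n - x1 - x2))

/-- pmf of the negative q-trinomial distribution of the second kind. -/
noncomputable def vpmf (q b1 b2 : ℝ) (n v1 v2 : ℕ) : ℝ :=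
  (qFact q (n + v1 + v2 - 1) / (qFact q v1 * qFact q v2 * qFact q (n - 1))) *
    b1 ^ v1 * b2 ^ v2 * ominus q b1 (n + v2) * ominus q b2 n


/-!
Conditioning on `v₂` factors the law into a negative q-binomial law of `v₂` (parameters `n, β₂`)
and a negative q-binomial law of `v₁` (parameters `n + v₂, β₁`); each has total mass one by the
q-binomial theorem `∑_v [N+v-1 choose v]_q t^v = 1 / ⟨1⊖t⟩_N`. Summing over `v₁` first leaves the
`m₂`-th q-factorial moment of the law of `v₂`. The identity
`[m+w]_{m,q} [n+m+w-1 choose m+w]_q = [n+m-1]_{m,q} [n+m+w-1 choose w]_q` turns that moment into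
a q-binomial series with parameter `n + m₂`, whose sum `1 / ⟨1⊖β₂⟩_{n+m₂}` gives the formula.

The q-binomial theorem is proved by induction on `N`: q-Pascal's rule exhibits the coefficients
for `N + 1` at `t` as the Cauchy product of a geometric series with the coefficients for `N`
at `q t`.
-/

theorem prod_Icc_one_eq_prod_range {M : Type*} [CommMonoid M] (f : ℕ → M) (m : ℕ) :
    ∏ i ∈ Icc 1 m, f i = ∏ i ∈ range m, f (i + 1) := by
  rw [← Ico_add_one_right_eq_Icc, prod_Ico_eq_prod_range, Nat.add_sub_cancel]
  simp only [add_comm 1]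

theorem hasSum_prod_of_nonneg {α β : Type*} {f : α × β → ℝ} {g : β → ℝ} {s : ℝ} (hf : 0 ≤ f)
    (hfib : ∀ b, HasSum (fun a => f (a, b)) (g b)) (hg : HasSum g s) : HasSum f s := by
  rw [← (Equiv.prodComm β α).hasSum_iff]
  have hsum : Summable (f ∘ Equiv.prodComm β α) :=
    (summable_prod_of_nonneg (f := f ∘ Equiv.prodComm β α) fun p => hf _).2
      ⟨fun b => (hfib b).summable, by
        simpa only [Function.comp_apply, Equiv.prodComm_apply, Prod.swap_prod_mk,
          (hfib _).tsum_eq] using hg.summable⟩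
  exact (hsum.hasSum.prod_fiberwise hfib).unique hg ▸ hsum.hasSum

theorem HasSum.mul_antidiagonal_of_nonneg {f g : ℕ → ℝ} {s t : ℝ} (hf : HasSum f s)
    (hg : HasSum g t) (hf0 : ∀ n, 0 ≤ f n) (hg0 : ∀ n, 0 ≤ g n) :
    HasSum (fun n => ∑ p ∈ antidiagonal n, f p.1 * g p.2) (s * t) := by
  have hfg := hf.summable.mul_of_nonneg hg.summable hf0 hg0
  rw [← hf.tsum_eq, ← hg.tsum_eq,
    hf.summable.tsum_mul_tsum_eq_tsum_sum_antidiagonal hg.summable hfg]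
  exact (summable_sum_mul_antidiagonal_of_summable_mul hfg).hasSum

section qMultichoose

variable {K : Type*} [Field K]

/-- `[N + v - 1 choose v]_q`, written as a product so that no subtraction occurs. -/
def qMultichoose (q : K) (N v : ℕ) : K :=
  ∏ i ∈ range v, (1 - q ^ (N + i)) / (1 - q ^ (i + 1))

@[simp]
theorem qMultichoose_zero_right (q : K) (N : ℕ) : qMultichoose q N 0 = 1 := by
  simp [qMultichoose]

theorem qMultichoose_zero_succ (q : K) (v : ℕ) : qMultichoose q 0 (v + 1) = 0 :=
  prod_eq_zero (mem_range.2 v.succ_pos) (by simp)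

theorem qMultichoose_succ_right (q : K) (N v : ℕ) :
    qMultichoose q N (v + 1) = qMultichoose q N v * ((1 - q ^ (N + v)) / (1 - q ^ (v + 1))) :=
  prod_range_succ _ _

theorem qMultichoose_succ_right_eq_mul_succ_left (q : K) (N v : ℕ) :
    qMultichoose q N (v + 1) = (1 - q ^ N) / (1 - q ^ (v + 1)) * qMultichoose q (N + 1) v := by
  simp only [qMultichoose, prod_div_distrib]
  rw [prod_range_succ' (fun i => 1 - q ^ (N + i)), prod_range_succ (fun i => 1 - q ^ (i + 1)),
    mul_div_mul_comm, mul_comm, add_zero]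
  simp only [add_assoc, add_comm 1]

/-- q-Pascal's rule. -/
theorem qMultichoose_succ_succ {q : K} {w : ℕ} (N : ℕ) (hq : q ^ (w + 1) ≠ 1) :
    qMultichoose q (N + 1) (w + 1) =
      qMultichoose q (N + 1) w + q ^ (w + 1) * qMultichoose q N (w + 1) := by
  have hq' : 1 - q ^ (w + 1) ≠ 0 := sub_ne_zero.2 hq.symm
  rw [qMultichoose_succ_right, qMultichoose_succ_right_eq_mul_succ_left]
  field_simp
  ring

theorem qMultichoose_succ_mul_pow {q : K} (hq : ∀ k, q ^ (k + 1) ≠ 1) (N w : ℕ) (t : K) :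
    qMultichoose q (N + 1) w * t ^ w =
      ∑ p ∈ antidiagonal w, t ^ p.1 * (qMultichoose q N p.2 * (q * t) ^ p.2) := by
  induction w with
  | zero => simp
  | succ w ih =>
    have hshift : ∑ p ∈ antidiagonal w, t ^ (p.1 + 1) * (qMultichoose q N p.2 * (q * t) ^ p.2) =
        t * (qMultichoose q (N + 1) w * t ^ w) := by
      rw [ih, mul_sum]
      exact sum_congr rfl fun p _ => by ring
    rw [Nat.sum_antidiagonal_succ, hshift, qMultichoose_succ_succ N (hq w)]
    ring

end qMultichoose

theorem ominus_eq_prod_range (q β : ℝ) (m : ℕ) :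
    ominus q β m = ∏ i ∈ range m, (1 - β * q ^ i) := by
  simp only [ominus, prod_Icc_one_eq_prod_range, Nat.add_sub_cancel]

theorem ominus_succ (q t : ℝ) (N : ℕ) : ominus q t (N + 1) = (1 - t) * ominus q (q * t) N := by
  simp only [ominus_eq_prod_range, prod_range_succ', pow_zero, mul_one, pow_succ]
  rw [mul_comm]
  congr 1
  exact prod_congr rfl fun i _ => by ring

theorem ominus_add (q β : ℝ) (a b : ℕ) :
    ominus q β (a + b) = ominus q β a * ∏ i ∈ Icc 1 b, (1 - β * q ^ (a + i - 1)) := by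
  simp only [ominus_eq_prod_range, prod_range_add, prod_Icc_one_eq_prod_range]
  simp only [← add_assoc, Nat.add_sub_cancel]

theorem ominus_pos {q β : ℝ} (hq0 : 0 ≤ q) (hq1 : q ≤ 1) (hβ : β < 1) (m : ℕ) :
    0 < ominus q β m := by
  rw [ominus_eq_prod_range]
  refine prod_pos fun i _ => ?_
  have hx1 : q ^ i ≤ 1 := pow_le_one₀ hq0 hq1
  have hx0 : 0 ≤ q ^ i := pow_nonneg hq0 i
  rcases le_or_gt β 0 with hβ0 | hβ0
  · nlinarith
  · nlinarith

theorem qMultichoose_nonneg {q : ℝ} (hq0 : 0 ≤ q) (hq1 : q ≤ 1) (N v : ℕ) :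
    0 ≤ qMultichoose q N v :=
  prod_nonneg fun _ _ =>
    div_nonneg (sub_nonneg.2 (pow_le_one₀ hq0 hq1)) (sub_nonneg.2 (pow_le_one₀ hq0 hq1))

/-- The q-binomial theorem. -/
theorem hasSum_qMultichoose_mul_pow {q t : ℝ} (hq0 : 0 ≤ q) (hq1 : q < 1) (ht0 : 0 ≤ t)
    (ht1 : t < 1) (N : ℕ) :
    HasSum (fun v => qMultichoose q N v * t ^ v) (ominus q t N)⁻¹ := by
  induction N generalizing t with
  | zero =>
    have h := hasSum_single (f := fun v => qMultichoose q 0 v * t ^ v) 0 fun v hv => by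
      obtain ⟨v, rfl⟩ := Nat.exists_eq_succ_of_ne_zero hv
      simp [qMultichoose_zero_succ]
    simpa [ominus] using h
  | succ N ih =>
    have hqt0 : 0 ≤ q * t := mul_nonneg hq0 ht0
    have hqt1 : q * t < 1 := by nlinarith
    have hq : ∀ k, q ^ (k + 1) ≠ 1 := fun k => (pow_lt_one₀ hq0 hq1 k.succ_ne_zero).ne
    have h := (hasSum_geometric_of_lt_one ht0 ht1).mul_antidiagonal_of_nonneg (ih hqt0 hqt1)
      (fun n => pow_nonneg ht0 n)
      (fun n => mul_nonneg (qMultichoose_nonneg hq0 hq1.le N n) (pow_nonneg hqt0 n))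
    rw [ominus_succ, mul_inv]
    simpa only [qMultichoose_succ_mul_pow hq] using h

noncomputable def negQBinomial (q β : ℝ) (N v : ℕ) : ℝ := qMultichoose q N v * β ^ v * ominus q β N

theorem negQBinomial_nonneg {q β : ℝ} (hq0 : 0 ≤ q) (hq1 : q < 1) (hβ0 : 0 ≤ β) (hβ1 : β < 1)
    (N v : ℕ) : 0 ≤ negQBinomial q β N v :=
  mul_nonneg (mul_nonneg (qMultichoose_nonneg hq0 hq1.le N v) (pow_nonneg hβ0 v))
    (ominus_pos hq0 hq1.le hβ1 N).le

theorem hasSum_negQBinomial {q β : ℝ} (hq0 : 0 ≤ q) (hq1 : q < 1) (hβ0 : 0 ≤ β) (hβ1 : β < 1)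
    (N : ℕ) : HasSum (negQBinomial q β N) 1 := by
  have h := (hasSum_qMultichoose_mul_pow hq0 hq1 hβ0 hβ1 N).mul_right (ominus q β N)
  rwa [inv_mul_cancel₀ (ominus_pos hq0 hq1.le hβ1 N).ne'] at h

theorem qInt_natCast (q : ℝ) (k : ℕ) : qInt q k = (1 - q ^ k) / (1 - q) := by
  rw [qInt, zpow_natCast]

theorem qFact_succ (q : ℝ) (n : ℕ) : qFact q (n + 1) = qFact q n * qInt q (n + 1 : ℕ) :=
  prod_Icc_succ_top (by omega) _

theorem qFact_ne_zero {q : ℝ} (hq : ∀ k, q ^ (k + 1) ≠ 1) (n : ℕ) : qFact q n ≠ 0 := by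
  refine prod_ne_zero_iff.2 fun i hi => ?_
  obtain ⟨k, rfl⟩ := Nat.exists_eq_add_of_le' (mem_Icc.1 hi).1
  rw [qInt_natCast]
  exact div_ne_zero (sub_ne_zero.2 (hq k).symm) (sub_ne_zero.2 (by simpa using (hq 0).symm))

theorem qFact_pos {q : ℝ} (hq0 : 0 ≤ q) (hq1 : q < 1) (n : ℕ) : 0 < qFact q n := by
  refine prod_pos fun i hi => ?_
  rw [qInt_natCast]
  exact div_pos (sub_pos.2 (pow_lt_one₀ hq0 hq1 (by simp at hi; omega))) (sub_pos.2 hq1)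

theorem qFact_add {q : ℝ} (hq : ∀ k, q ^ (k + 1) ≠ 1) (a b : ℕ) :
    qFact q (a + b) = qFact q a * qFact q b * qMultichoose q (a + 1) b := by
  induction b with
  | zero => simp [qFact]
  | succ b ih =>
    have h1 : 1 - q ≠ 0 := sub_ne_zero.2 (by simpa using (hq 0).symm)
    have h2 : 1 - q ^ (b + 1) ≠ 0 := sub_ne_zero.2 (hq b).symm
    rw [← add_assoc, qFact_succ, ih, qFact_succ, qMultichoose_succ_right, qInt_natCast,
      qInt_natCast]
    field_simp
    ring

theorem qFact_add_eq_mul_qFall (q : ℝ) (u m : ℕ) :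
    qFact q (u + m) = qFact q u * qFall q (u + m : ℕ) m := by
  induction m generalizing u with
  | zero => simp [qFall]
  | succ m ih =>
    rw [show u + (m + 1) = u + 1 + m by omega, ih, qFact_succ, mul_assoc]
    congr 1
    rw [mul_comm, qFall, qFall, prod_Icc_succ_top (by omega)]
    congr 2
    push_cast
    ring

theorem qFall_natCast_eq_zero (q : ℝ) {u m : ℕ} (h : u < m) : qFall q u m = 0 :=
  prod_eq_zero (i := u + 1) (mem_Icc.2 ⟨by omega, by omega⟩) (by simp [qInt])

theorem qFall_natCast_nonneg {q : ℝ} (hq0 : 0 ≤ q) (hq1 : q < 1) (u m : ℕ) :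
    0 ≤ qFall q u m := by
  rcases lt_or_ge u m with h | h
  · rw [qFall_natCast_eq_zero q h]
  · obtain ⟨w, rfl⟩ := Nat.exists_eq_add_of_le' h
    have hprod := qFact_add_eq_mul_qFall q w m
    exact (pos_of_mul_pos_right (hprod ▸ qFact_pos hq0 hq1 _) (qFact_pos hq0 hq1 w).le).le

theorem qFall_mul_qMultichoose {q : ℝ} (hq : ∀ k, q ^ (k + 1) ≠ 1) (a w m : ℕ) :
    qFall q (w + m : ℕ) m * qMultichoose q (a + 1) (w + m) =
      qFall q (a + m : ℕ) m * qMultichoose q (a + m + 1) w := by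
  refine mul_left_cancel₀ (mul_ne_zero (qFact_ne_zero hq a) (qFact_ne_zero hq w)) ?_
  calc qFact q a * qFact q w * (qFall q (w + m : ℕ) m * qMultichoose q (a + 1) (w + m))
      = qFact q (a + (w + m)) := by rw [qFact_add hq, qFact_add_eq_mul_qFall]; ring
    _ = qFact q (a + m + w) := by rw [add_comm w, add_assoc]
    _ = _ := by rw [qFact_add hq, qFact_add_eq_mul_qFall]; ring

theorem vpmf_eq_mul {q : ℝ} (hq : ∀ k, q ^ (k + 1) ≠ 1) {n : ℕ} (hn : 1 ≤ n) (β1 β2 : ℝ)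
    (v1 v2 : ℕ) :
    vpmf q β1 β2 n v1 v2 = negQBinomial q β2 n v2 * negQBinomial q β1 (n + v2) v1 := by
  obtain ⟨a, rfl⟩ := Nat.exists_eq_add_of_le' hn
  have hfact : qFact q (a + 1 + v1 + v2 - 1) =
      qFact q a * qFact q v2 * qMultichoose q (a + 1) v2 * qFact q v1 *
        qMultichoose q (a + 1 + v2) v1 := by
    rw [show a + 1 + v1 + v2 - 1 = a + v2 + v1 by omega, qFact_add hq, qFact_add hq,
      show a + v2 + 1 = a + 1 + v2 by omega]
  have hne := qFact_ne_zero hq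
  rw [vpmf, negQBinomial, negQBinomial, hfact, Nat.add_sub_cancel]
  field_simp [hne a, hne v1, hne v2]

theorem hasSum_qFall_mul_negQBinomial {q β : ℝ} (hq0 : 0 ≤ q) (hq1 : q < 1) (hβ0 : 0 ≤ β)
    (hβ1 : β < 1) {N : ℕ} (hN : 1 ≤ N) (m : ℕ) :
    HasSum (fun v : ℕ => qFall q v m * negQBinomial q β N v)
      (qFall q ((N : ℤ) + (m : ℤ) - 1) m * β ^ m / ∏ i ∈ Icc 1 m, (1 - β * q ^ (N + i - 1))) := by
  obtain ⟨a, rfl⟩ := Nat.exists_eq_add_of_le' hN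
  have hq : ∀ k, q ^ (k + 1) ≠ 1 := fun k => (pow_lt_one₀ hq0 hq1 k.succ_ne_zero).ne
  set C := qFall q (a + m : ℕ) m * β ^ m * ominus q β (a + 1)
  have hshift : ∀ w, qFall q (w + m : ℕ) m * negQBinomial q β (a + 1) (w + m) =
      C * (qMultichoose q (a + 1 + m) w * β ^ w) := fun w => by
    rw [negQBinomial, pow_add, add_right_comm a 1 m]
    linear_combination (β ^ w * β ^ m * ominus q β (a + 1)) * qFall_mul_qMultichoose hq a w m
  rw [← hasSum_nat_add_iff' m, sum_eq_zero fun i hi => by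
    rw [qFall_natCast_eq_zero q (mem_range.1 hi), zero_mul], sub_zero]
  have hvalue : qFall q ((a + 1 : ℕ) + (m : ℤ) - 1) m * β ^ m /
      ∏ i ∈ Icc 1 m, (1 - β * q ^ (a + 1 + i - 1)) = C * (ominus q β (a + 1 + m))⁻¹ := by
    have hO := (ominus_pos hq0 hq1.le hβ1 (a + 1)).ne'
    rw [ominus_add, show ((a + 1 : ℕ) : ℤ) + m - 1 = (a + m : ℕ) by push_cast; ring]
    field_simp
    rfl
  simp only [hshift, hvalue]
  exact (hasSum_qMultichoose_mul_pow hq0 hq1 hβ0 hβ1 (a + 1 + m)).mul_left C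

theorem stmt16 (q : ℝ) (hq0 : 0 < q) (hq1 : q < 1) (n : ℕ) (hn : 1 ≤ n) (β1 β2 : ℝ)
    (hβ1 : 0 < β1) (hβ1' : β1 < 1) (hβ2 : 0 < β2) (hβ2' : β2 < 1) (m2 : ℕ) :
    HasSum (fun v : ℕ × ℕ => qFall q (v.2 : ℤ) m2 * vpmf q β1 β2 n v.1 v.2)
      (qFall q ((n : ℤ) + (m2 : ℤ) - 1) m2 * β2 ^ m2 /
        ∏ i ∈ Finset.Icc 1 m2, (1 - β2 * q ^ (n + i - 1))) := by
  have hq : ∀ k, q ^ (k + 1) ≠ 1 := fun k => (pow_lt_one₀ hq0.le hq1 k.succ_ne_zero).ne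
  have hterm : ∀ v : ℕ × ℕ, qFall q (v.2 : ℤ) m2 * vpmf q β1 β2 n v.1 v.2 =
      qFall q v.2 m2 * negQBinomial q β2 n v.2 * negQBinomial q β1 (n + v.2) v.1 := fun v => by
    rw [vpmf_eq_mul hq hn, mul_assoc]
  simp only [hterm]
  refine hasSum_prod_of_nonneg (fun v => ?_) (fun v2 => ?_)
    (hasSum_qFall_mul_negQBinomial hq0.le hq1 hβ2.le hβ2' hn m2)
  · exact mul_nonneg (mul_nonneg (qFall_natCast_nonneg hq0.le hq1 _ _)
      (negQBinomial_nonneg hq0.le hq1 hβ2.le hβ2' _ _))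
      (negQBinomial_nonneg hq0.le hq1 hβ1.le hβ1' _ _)
  · simpa using (hasSum_negQBinomial hq0.le hq1 hβ1.le hβ1' (n + v2)).mul_left
      (qFall q v2 m2 * negQBinomial q β2 n v2)
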